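/- With the buffered codeword x = u ‖ 0^w ‖ 1 ‖ p, suppose δ ≤ w deletions occur, all within a single window of size at most w. Let λ = k + w − δ + 1 and let y be the received string. Then y_λ = 1 if and only if all deleted positions lie in the first k + w positions of x (i.e., to the left of the buffer's terminal 1); in that case the systematic bits may be affected, and otherwise (y_λ = 0) the first k bits of y equal u. -/

import Mathlib

/-!
The entry of `x` at a surviving position `m` lands at position `#{i < m | i ∉ D}` of `y`.
If every deletion precedes the terminal `1` at position `k + w`, that `1` therefore lands at
`k + w - δ`. Otherwise the entry at `k + w - δ` of `y` comes from some `m` with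
`k + w - δ ≤ m ≤ k + w`, and `m = k + w` would force all `δ` deletions below `m`; since `δ ≤ w`,
`m` lies in the run of zeros. In that case the window contains a position `≥ k + w`, so it
starts after `k` and `u` is untouched.
-/

/-- Delete from a list the entries at the (0-based) positions in `D`. -/
def deleteIndices {α : Type*} (x : List α) (D : Finset ℕ) : List α :=
  (x.zipIdx.filter (fun q => q.2 ∉ D)).map Prod.fst

open Finset

theorem card_filter_range_notMem_add_card_filter_lt (D : Finset ℕ) (m : ℕ) :
    #{i ∈ range m | i ∉ D} + #{i ∈ D | i < m} = m := by
  have h : {i ∈ D | i < m} = {i ∈ range m | ¬i ∉ D} := by ext; simp [and_comm]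
  rw [h, card_filter_add_card_filter_not, card_range]

section DeleteIndices

variable {α : Type*}

def deleteIndicesFrom (n : ℕ) (x : List α) (D : Finset ℕ) : List α :=
  ((x.zipIdx n).filter (fun q => q.2 ∉ D)).map Prod.fst

theorem deleteIndicesFrom_zero (x : List α) (D : Finset ℕ) :
    deleteIndicesFrom 0 x D = deleteIndices x D := rfl

theorem deleteIndicesFrom_nil (n : ℕ) (D : Finset ℕ) :
    deleteIndicesFrom n ([] : List α) D = [] := rfl

theorem deleteIndicesFrom_cons (n : ℕ) (b : α) (x : List α) (D : Finset ℕ) :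
    deleteIndicesFrom n (b :: x) D =
      if n ∈ D then deleteIndicesFrom (n + 1) x D else b :: deleteIndicesFrom (n + 1) x D := by
  by_cases h : n ∈ D <;> simp [deleteIndicesFrom, List.zipIdx_cons, h]

theorem card_filter_notMem_Ico_eq (D : Finset ℕ) {n m : ℕ} (h : n < m) :
    #{i ∈ Ico n m | i ∉ D} = #{i ∈ Ico (n + 1) m | i ∉ D} + if n ∈ D then 0 else 1 := by
  rw [← insert_Ico_add_one_left_eq_Ico h, filter_insert]
  split_ifs with hn
  · rfl
  · exact card_insert_of_notMem (by simp)

theorem getElem?_deleteIndicesFrom_card_filter (x : List α) (D : Finset ℕ) {n m : ℕ}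
    (hnm : n ≤ m) (hm : m ∉ D) :
    (deleteIndicesFrom n x D)[#{i ∈ Ico n m | i ∉ D}]? = x[m - n]? := by
  induction x generalizing n with
  | nil => simp [deleteIndicesFrom_nil]
  | cons b x ih =>
    rcases hnm.eq_or_lt with rfl | hlt
    · simp [deleteIndicesFrom_cons, hm]
    · rw [deleteIndicesFrom_cons, card_filter_notMem_Ico_eq D hlt,
        show m - n = m - (n + 1) + 1 by omega, List.getElem?_cons_succ, ← ih hlt]
      split_ifs <;> simp

theorem exists_of_getElem?_deleteIndicesFrom_eq_some {x : List α} {D : Finset ℕ} {n j : ℕ}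
    {v : α} (h : (deleteIndicesFrom n x D)[j]? = some v) :
    ∃ m, n ≤ m ∧ m ∉ D ∧ x[m - n]? = some v ∧ j = #{i ∈ Ico n m | i ∉ D} := by
  induction x generalizing n j with
  | nil => simp [deleteIndicesFrom_nil] at h
  | cons b x ih =>
    rw [deleteIndicesFrom_cons] at h
    split_ifs at h with hn
    · obtain ⟨m, hnm, hm, hxm, rfl⟩ := ih h
      refine ⟨m, by omega, hm, ?_, ?_⟩
      · rwa [show m - n = m - (n + 1) + 1 by omega, List.getElem?_cons_succ]
      · rw [card_filter_notMem_Ico_eq D (n := n) (by omega), if_pos hn, add_zero]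
    · cases j with
      | zero => exact ⟨n, le_rfl, hn, by simpa using h, by simp⟩
      | succ j =>
        obtain ⟨m, hnm, hm, hxm, rfl⟩ := ih h
        refine ⟨m, by omega, hm, ?_, ?_⟩
        · rwa [show m - n = m - (n + 1) + 1 by omega, List.getElem?_cons_succ]
        · rw [card_filter_notMem_Ico_eq D (n := n) (by omega), if_neg hn]

theorem getElem?_deleteIndices_card_filter (x : List α) (D : Finset ℕ) {m : ℕ} (hm : m ∉ D) :
    (deleteIndices x D)[#{i ∈ range m | i ∉ D}]? = x[m]? := by
  rw [range_eq_Ico, ← deleteIndicesFrom_zero, getElem?_deleteIndicesFrom_card_filter x D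
    (Nat.zero_le m) hm, Nat.sub_zero]

theorem exists_of_getElem?_deleteIndices_eq_some {x : List α} {D : Finset ℕ} {j : ℕ} {v : α}
    (h : (deleteIndices x D)[j]? = some v) :
    ∃ m, m ∉ D ∧ x[m]? = some v ∧ j = #{i ∈ range m | i ∉ D} := by
  rw [← deleteIndicesFrom_zero] at h
  obtain ⟨m, -, hm, hxm, hj⟩ := exists_of_getElem?_deleteIndicesFrom_eq_some h
  exact ⟨m, hm, by simpa using hxm, by rw [hj, range_eq_Ico]⟩

theorem deleteIndices_append_of_forall_le (l₁ l₂ : List α) {D : Finset ℕ}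
    (h : ∀ i ∈ D, l₁.length ≤ i) :
    deleteIndices (l₁ ++ l₂) D = l₁ ++ deleteIndicesFrom l₁.length l₂ D := by
  have hkeep : (l₁.zipIdx.filter fun q => q.2 ∉ D) = l₁.zipIdx :=
    List.filter_eq_self.2 fun q hq => by
      have := (List.mem_zipIdx (x := q.1) (i := q.2) hq).2.1
      simpa using fun hqD => absurd (h _ hqD) (by omega)
  rw [deleteIndices, List.zipIdx_append, List.filter_append, hkeep, List.map_append]
  simp [deleteIndicesFrom]

theorem take_deleteIndices_append_of_forall_le (l₁ l₂ : List α) {D : Finset ℕ}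
    (h : ∀ i ∈ D, l₁.length ≤ i) :
    (deleteIndices (l₁ ++ l₂) D).take l₁.length = l₁ := by
  rw [deleteIndices_append_of_forall_le l₁ l₂ h, List.take_left' rfl]

end DeleteIndices

section Buffer

variable (u p : List Bool) (w : ℕ)

theorem getElem?_buffer_of_lt {m : ℕ} (h₁ : u.length ≤ m) (h₂ : m < u.length + w) :
    (u ++ List.replicate w false ++ [true] ++ p)[m]? = some false := by
  simp only [List.append_assoc, List.getElem?_append_right h₁, List.getElem?_append_left
    (show m - u.length < (List.replicate w false).length by simp; omega), List.getElem?_replicate]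
  simp; omega

theorem getElem?_buffer_end :
    (u ++ List.replicate w false ++ [true] ++ p)[u.length + w]? = some true := by
  simp

variable {u p w}

theorem getElem?_deleteIndices_buffer_eq_some_true_iff {D : Finset ℕ} (hD : #D ≤ w) :
    (deleteIndices (u ++ List.replicate w false ++ [true] ++ p) D)[u.length + w - #D]? =
        some true ↔ ∀ i ∈ D, i < u.length + w := by
  constructor
  · intro h
    by_contra! hD'
    obtain ⟨d, hd, hkd⟩ := hD'
    obtain ⟨m, hm, hxm, hj⟩ := exists_of_getElem?_deleteIndices_eq_some h
    have hsplit := card_filter_range_notMem_add_card_filter_lt D m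
    have hle : #{i ∈ D | i < m} ≤ #D := card_filter_le _ _
    have hlt : m < u.length + w := by
      by_contra hge
      have hall : #{i ∈ D | i < m} = #D := by omega
      have := card_filter_eq_iff.mp hall d hd
      omega
    rw [getElem?_buffer_of_lt u p w (by omega) hlt] at hxm
    simp at hxm
  · intro hall
    have hkept : #{i ∈ range (u.length + w) | i ∉ D} = u.length + w - #D := by
      have := card_filter_range_notMem_add_card_filter_lt D (u.length + w)
      rw [filter_true_of_mem hall] at this
      omega
    rw [← hkept, getElem?_deleteIndices_card_filter _ _ fun h => lt_irrefl _ (hall _ h),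
      getElem?_buffer_end]

end Buffer

theorem stmt12_general (k w : ℕ) (u p : List Bool) (hu : u.length = k)
    (D : Finset ℕ) (a : ℕ) (hwin : D ⊆ Finset.Ico a (a + w)) :
    let x : List Bool := u ++ List.replicate w false ++ [true] ++ p
    let δ := D.card
    let y := deleteIndices x D
    (y.getD (k + w - δ) false = true ↔ ∀ i ∈ D, i < k + w) ∧
      (y.getD (k + w - δ) false = false → y.take k = u) := by
  intro x δ y
  subst hu
  have hδ : δ ≤ w := by simpa using card_le_card hwin
  have hbit : y.getD (u.length + w - δ) false = true ↔ ∀ i ∈ D, i < u.length + w := by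
    rw [List.getD_eq_getElem?_getD, ← getElem?_deleteIndices_buffer_eq_some_true_iff (p := p) hδ]
    simp [Option.getD_eq_iff, y, x, δ]
  refine ⟨hbit, fun hfalse => ?_⟩
  obtain ⟨d, hd, hkd⟩ : ∃ d ∈ D, u.length + w ≤ d := by
    by_contra! hall
    exact Bool.false_ne_true (hfalse ▸ hbit.mpr hall)
  have hD_ge : ∀ i ∈ D, u.length ≤ i := fun i hi => by
    have := mem_Ico.mp (hwin hi)
    have := mem_Ico.mp (hwin hd)
    omega
  simpa only [y, x, List.append_assoc] using take_deleteIndices_append_of_forall_le u _ hD_ge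

/-- With the buffered codeword x = u ‖ 0^w ‖ 1 ‖ p and δ ≤ w deletions localized in
a single window of size w, the bit of the received string y at (1-based) position
λ = k+w−δ+1 (0-based index k+w−δ) equals 1 iff all deleted positions lie to the left
of the buffer's terminal 1; and if that bit is 0 then the first k bits of y equal u. -/
theorem stmt12 (k w r : ℕ) (u p : List Bool) (hu : u.length = k) (hp : p.length = r)
    (D : Finset ℕ) (a : ℕ) (hwin : D ⊆ Finset.Ico a (a + w))
    (hδ : D.card ≤ w) (hrange : ∀ i ∈ D, i < k + w + 1 + r) :
    let x : List Bool := u ++ List.replicate w false ++ [true] ++ p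
    let δ := D.card
    let y := deleteIndices x D
    (y.getD (k + w - δ) false = true ↔ ∀ i ∈ D, i < k + w) ∧
      (y.getD (k + w - δ) false = false → y.take k = u) :=
  stmt12_general k w u p hu D a hwin
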